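/- arXiv:1812.02838 — 2 statements merged into one kernel-verified Lean document; each statement's English description precedes it below -/
import Mathlib

section
/- If T is a power bounded n-quasi-m-isometric operator (i.e., sup_k ||T^k|| < ∞), then T is an n-quasi-isometry, i.e., T^{*n}(T^*T - I)T^n = 0. -/
/-!
For `x ∈ H` put `b k = ‖T^k T^n x‖²`. Pairing `T^{*n} β_m(T) T^n (T^j x)` with `T^j x` gives the
`m`-th forward difference of `b` at `j`, so `Δ^m b = 0` and `b` is a polynomial sequence; power
boundedness makes it bounded, hence constant. Then `b 1 = b 0` says that the quadratic form of
`T^{*n} (T^* T - 1) T^n` vanishes, and over `ℂ` an operator with vanishing quadratic form is zero.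
-/

variable {H : Type*} [NormedAddCommGroup H] [InnerProductSpace ℂ H] [CompleteSpace H]

/-- `β_m(T) = ∑_{k=0}^m (-1)^{m-k} C(m,k) T^{*k} T^k`. -/
noncomputable def betaOp (T : H →L[ℂ] H) (m : ℕ) : H →L[ℂ] H :=
  ∑ k ∈ Finset.range (m + 1),
    ((-1 : ℂ) ^ (m - k) * (m.choose k : ℂ)) • ((ContinuousLinearMap.adjoint T) ^ k * T ^ k)

/-- `T` is an `n`-quasi-`m`-isometry if `T^{*n} β_m(T) T^n = 0`. -/
def IsNQuasiMIsometry (T : H →L[ℂ] H) (n m : ℕ) : Prop :=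
  (ContinuousLinearMap.adjoint T) ^ n * betaOp T m * T ^ n = 0

open scoped InnerProductSpace fwdDiff

section ForwardDifference

lemma apply_eq_add_nsmul_of_fwdDiff_eq {G : Type*} [AddCommGroup G] {f : ℕ → G} {c : G}
    (h : ∀ k, Δ_[1] f k = c) (k : ℕ) : f k = f 0 + k • c := by
  induction k with
  | zero => simp
  | succ k ih =>
    rw [← sub_add_cancel (f (k + 1)) (f k), ← fwdDiff, h, ih, succ_nsmul]
    abel

variable {E : Type*} [NormedAddCommGroup E] [NormedSpace ℝ E]

lemma eq_zero_of_forall_norm_nsmul_le {c : E} {M : ℝ} (h : ∀ k : ℕ, ‖k • c‖ ≤ M) : c = 0 := by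
  by_contra hc
  have hpos : 0 < ‖c‖ := norm_pos_iff.mpr hc
  obtain ⟨k, hk⟩ := exists_nat_gt (M / ‖c‖)
  have := h k
  rw [RCLike.norm_nsmul ℝ, nsmul_eq_mul] at this
  rw [div_lt_iff₀ hpos] at hk
  linarith

lemma fwdDiff_eq_zero_of_fwdDiff_iter_eq_zero_of_norm_le {b : ℕ → E} {M : ℝ} {m : ℕ}
    (hb : ∀ k, ‖b k‖ ≤ M) (hΔ : Δ_[1] ^[m] b = 0) : Δ_[1] b = 0 := by
  induction m generalizing b M with
  | zero =>
    simp only [Function.iterate_zero, id_eq] at hΔ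
    funext k
    simp [fwdDiff, hΔ]
  | succ m ih =>
    have hΔb : ∀ k, ‖Δ_[1] b k‖ ≤ M + M := fun k =>
      (norm_sub_le _ _).trans (add_le_add (hb _) (hb _))
    have hΔΔb : Δ_[1] (Δ_[1] b) = 0 := ih hΔb (by rwa [Function.iterate_succ_apply] at hΔ)
    have hconst (k : ℕ) : Δ_[1] b k = Δ_[1] b 0 := by
      simpa using apply_eq_add_nsmul_of_fwdDiff_eq (c := (0 : E)) (congrFun hΔΔb) k
    have hΔb0 : Δ_[1] b 0 = 0 := eq_zero_of_forall_norm_nsmul_le fun k => by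
      rw [← add_sub_cancel_left (b 0) (k • _), ← apply_eq_add_nsmul_of_fwdDiff_eq hconst k]
      exact (norm_sub_le _ _).trans (add_le_add (hb _) (hb _))
    funext k
    rw [hconst, hΔb0, Pi.zero_apply]

end ForwardDifference

section Operators

open ContinuousLinearMap (adjoint adjoint_inner_left)

lemma adjoint_pow (T : H →L[ℂ] H) (k : ℕ) : adjoint T ^ k = adjoint (T ^ k) := by
  simp only [← ContinuousLinearMap.star_eq_adjoint, star_pow]

lemma inner_adjoint_pow_mul_mul_pow_apply_self (T A : H →L[ℂ] H) (n : ℕ) (x : H) :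
    ⟪(adjoint T ^ n * A * T ^ n) x, x⟫_ℂ = ⟪A ((T ^ n) x), (T ^ n) x⟫_ℂ := by
  rw [mul_apply_eq_comp, mul_apply_eq_comp, adjoint_pow, adjoint_inner_left]

lemma inner_adjoint_mul_self_sub_one_apply_self (T : H →L[ℂ] H) (x : H) :
    ⟪(adjoint T * T - 1) x, x⟫_ℂ = ((‖T x‖ ^ 2 - ‖x‖ ^ 2 : ℝ) : ℂ) := by
  rw [sub_apply, mul_apply_eq_comp, one_apply_eq_self, inner_sub_left, adjoint_inner_left,
    inner_self_eq_norm_sq_to_K, inner_self_eq_norm_sq_to_K]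
  push_cast
  rfl

lemma inner_betaOp_pow_apply_self (T : H →L[ℂ] H) (m j : ℕ) (x : H) :
    ⟪betaOp T m ((T ^ j) x), (T ^ j) x⟫_ℂ =
      ((Δ_[1] ^[m] (fun k => ‖(T ^ k) x‖ ^ 2) j : ℝ) : ℂ) := by
  rw [betaOp, fwdDiff_iter_eq_sum_shift, sum_apply, sum_inner, Complex.ofReal_sum]
  refine Finset.sum_congr rfl fun k _ => ?_
  rw [smul_apply, inner_smul_left, mul_apply_eq_comp, adjoint_pow,
    adjoint_inner_left, inner_self_eq_norm_sq_to_K, ← mul_apply_eq_comp, ← pow_add]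
  simp [add_comm k j, zsmul_eq_mul]

lemma IsNQuasiMIsometry.fwdDiff_iter_norm_sq_eq_zero {T : H →L[ℂ] H} {n m : ℕ}
    (hT : IsNQuasiMIsometry T n m) (x : H) :
    Δ_[1] ^[m] (fun k => ‖(T ^ k) ((T ^ n) x)‖ ^ 2) = 0 := by
  funext j
  have h := inner_betaOp_pow_apply_self T m j ((T ^ n) x)
  rwa [← mul_apply_eq_comp (T ^ j), pow_mul_comm, mul_apply_eq_comp,
    ← inner_adjoint_pow_mul_mul_pow_apply_self, hT, zero_apply,
    inner_zero_left, eq_comm, Complex.ofReal_eq_zero] at h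

end Operators

theorem nQuasiIsometry_of_powerBounded_general (T : H →L[ℂ] H) (m n : ℕ)
    (hT : IsNQuasiMIsometry T n m)
    (C : ℝ) (hpb : ∀ (k : ℕ) (x : H), ‖(T ^ k) x‖ ≤ C * ‖x‖) :
    (ContinuousLinearMap.adjoint T) ^ n * (ContinuousLinearMap.adjoint T * T - 1) * T ^ n = 0 := by
  have hisometric (x : H) : ‖T ((T ^ n) x)‖ ^ 2 = ‖(T ^ n) x‖ ^ 2 := by
    have hbdd (k : ℕ) : ‖‖(T ^ k) ((T ^ n) x)‖ ^ 2‖ ≤ (C * ‖(T ^ n) x‖) ^ 2 := by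
      rw [norm_pow, norm_norm]
      exact pow_le_pow_left₀ (norm_nonneg _) (hpb k _) 2
    have h := congrFun (fwdDiff_eq_zero_of_fwdDiff_iter_eq_zero_of_norm_le hbdd
      (hT.fwdDiff_iter_norm_sq_eq_zero x)) 0
    simpa [fwdDiff, sub_eq_zero] using h
  refine ContinuousLinearMap.coe_injective ((inner_map_self_eq_zero _).mp fun x => ?_)
  rw [ContinuousLinearMap.coe_coe, inner_adjoint_pow_mul_mul_pow_apply_self,
    inner_adjoint_mul_self_sub_one_apply_self, hisometric x, sub_self,
    Complex.ofReal_zero]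

theorem nQuasiIsometry_of_powerBounded (T : H →L[ℂ] H) (m n : ℕ) (hm : 1 ≤ m) (hn : 1 ≤ n)
    (hT : IsNQuasiMIsometry T n m)
    (C : ℝ) (hC : 0 < C) (hpb : ∀ (k : ℕ) (x : H), ‖(T ^ k) x‖ ≤ C * ‖x‖) :
    (ContinuousLinearMap.adjoint T) ^ n * (ContinuousLinearMap.adjoint T * T - 1) * T ^ n = 0 :=
  nQuasiIsometry_of_powerBounded_general T m n hT C hpb
end

section
/- If T is an n-quasi strict m-isometry, then the operators β_{k,n}(T) for k = 0, 1, ..., m-1 are linearly independent in L(H), where β_{k,n}(T) = T^{*n}(sum_{j=0}^k (-1)^{k-j} binom(k,j) T^{*j}T^j)T^n. -/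
/-!
With `Φ(A) = T* A T`, the binomial theorem gives `β_k(T) = (Φ - 1)^k (1)`, and since
`T*^n A T^n = Φ^n(A)` commutes with `Φ - 1`, the operators `Q_k = T*^n β_k(T) T^n` are the iterates
`(Φ - 1)^k Q_0`. The hypotheses say that `Q_0` is killed by `(Φ - 1)^m` but not by `(Φ - 1)^(m-1)`.
For any linear map `f` and such a vector `v`, the iterates `v, f v, …, f^(m-1) v` are linearly
independent: `v` is not in the span of the later ones, since `f^(m-1)` kills that span but not `v`.
-/

variable {H : Type*} [NormedAddCommGroup H] [InnerProductSpace ℂ H] [CompleteSpace H]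

theorem Module.End.linearIndependent_pow_apply {K V : Type*} [DivisionRing K] [AddCommGroup V]
    [Module K V] {f : Module.End K V} {v : V} {m : ℕ} (hzero : (f ^ (m + 1)) v = 0)
    (hne : (f ^ m) v ≠ 0) : LinearIndependent K (fun k : Fin (m + 1) => (f ^ (k : ℕ)) v) := by
  induction m generalizing v with
  | zero => exact (linearIndependent_unique_iff (ι := Fin 1)).2 (by simpa using hne)
  | succ m ih =>
    have hshift : ∀ k, (f ^ k) (f v) = (f ^ (k + 1)) v := fun k => by
      rw [pow_succ, Module.End.mul_apply]
    have htail : Fin.tail (fun k : Fin (m + 2) => (f ^ (k : ℕ)) v) =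
        fun k : Fin (m + 1) => (f ^ (k : ℕ)) (f v) := by
      ext k; simp [Fin.tail, hshift]
    rw [linearIndependent_finSucc, htail]
    refine ⟨ih (by rwa [hshift]) (by rwa [hshift]), fun hv => hne ?_⟩
    have hspan : Submodule.span K (Set.range fun k : Fin (m + 1) => (f ^ (k : ℕ)) (f v)) ≤
        LinearMap.ker (f ^ (m + 1)) := by
      refine Submodule.span_le.2 ?_
      rintro _ ⟨k, rfl⟩
      simp only [SetLike.mem_coe, LinearMap.mem_ker, hshift, ← Module.End.mul_apply, ← pow_add]
      rw [show m + 1 + (k + 1) = k + (m + 1 + 1) by omega, pow_add, Module.End.mul_apply, hzero,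
        map_zero]
    simpa using hspan hv

theorem LinearMap.mulLeft_mul_mulRight_pow_apply {R A : Type*} [CommSemiring R] [Semiring A]
    [Algebra R A] (a b x : A) (j : ℕ) :
    ((mulLeft R a * mulRight R b) ^ j) x = a ^ j * x * b ^ j := by
  rw [(commute_mulLeft_right a b).mul_pow, pow_mulLeft, pow_mulRight, Module.End.mul_apply,
    mulLeft_apply, mulRight_apply, mul_assoc]

noncomputable def conjAdjoint (T : H →L[ℂ] H) : Module.End ℂ (H →L[ℂ] H) :=
  LinearMap.mulLeft ℂ (ContinuousLinearMap.adjoint T) * LinearMap.mulRight ℂ T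

theorem conjAdjoint_pow_apply (T A : H →L[ℂ] H) (j : ℕ) :
    (conjAdjoint T ^ j) A = ContinuousLinearMap.adjoint T ^ j * A * T ^ j :=
  LinearMap.mulLeft_mul_mulRight_pow_apply _ _ _ _

theorem betaOp_eq_sub_one_pow_apply_one (T : H →L[ℂ] H) (m : ℕ) :
    betaOp T m = ((conjAdjoint T - 1) ^ m) 1 := by
  rw [sub_eq_add_neg, (Commute.neg_one_right (R := Module.End ℂ (H →L[ℂ] H)) _).add_pow, betaOp,
    LinearMap.sum_apply]
  refine Finset.sum_congr rfl fun k _ => ?_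
  have hcoeff : ((-1 : Module.End ℂ (H →L[ℂ] H)) ^ (m - k) * (m.choose k : Module.End ℂ _)) =
      algebraMap ℂ _ ((-1 : ℂ) ^ (m - k) * (m.choose k : ℂ)) := by
    rw [map_mul, map_pow, map_neg, map_one, map_natCast]
  rw [mul_assoc, hcoeff, Module.End.mul_apply, Module.algebraMap_end_apply, map_smul,
    conjAdjoint_pow_apply, mul_one]

theorem adjoint_pow_mul_betaOp_mul_pow (T : H →L[ℂ] H) (n k : ℕ) :
    ContinuousLinearMap.adjoint T ^ n * betaOp T k * T ^ n =
      ((conjAdjoint T - 1) ^ k) (ContinuousLinearMap.adjoint T ^ n * T ^ n) := by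
  have hcomm : Commute (conjAdjoint T ^ n) ((conjAdjoint T - 1) ^ k) :=
    ((Commute.refl _).sub_right (Commute.one_right _)).pow_pow n k
  rw [betaOp_eq_sub_one_pow_apply_one, ← conjAdjoint_pow_apply, ← Module.End.mul_apply, hcomm.eq,
    Module.End.mul_apply, conjAdjoint_pow_apply, mul_one]

theorem linearIndependent_of_nQuasi_strict_mIsometry_general (T : H →L[ℂ] H) (m n : ℕ)
    (hT : (ContinuousLinearMap.adjoint T) ^ n * betaOp T m * T ^ n = 0)
    (hstrict : (ContinuousLinearMap.adjoint T) ^ n * betaOp T (m - 1) * T ^ n ≠ 0) :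
    LinearIndependent ℂ
      (fun k : Fin m => (ContinuousLinearMap.adjoint T) ^ n * betaOp T k * T ^ n) := by
  cases m with
  | zero => exact linearIndependent_empty_type
  | succ m =>
    simp only [adjoint_pow_mul_betaOp_mul_pow, Nat.add_sub_cancel] at hT hstrict ⊢
    exact Module.End.linearIndependent_pow_apply hT hstrict

theorem linearIndependent_of_nQuasi_strict_mIsometry (T : H →L[ℂ] H) (m n : ℕ)
    (hm : 1 ≤ m) (hn : 1 ≤ n)
    (hT : (ContinuousLinearMap.adjoint T) ^ n * betaOp T m * T ^ n = 0)
    (hstrict : (ContinuousLinearMap.adjoint T) ^ n * betaOp T (m - 1) * T ^ n ≠ 0) :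
    LinearIndependent ℂ
      (fun k : Fin m => (ContinuousLinearMap.adjoint T) ^ n * betaOp T k * T ^ n) :=
  linearIndependent_of_nQuasi_strict_mIsometry_general T m n hT hstrict
end
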